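/- Let u, w ∈ W with a directed edge u → w = us_β in the quantum Bruhat graph, and let j ∈ I. If w⁻¹α_j is a negative root and u⁻¹α_j is a positive root, then the edge u → w is a Bruhat edge, β = u⁻¹α_j, and w = s_j u. -/

import Mathlib

/-- An axiomatized finite crystallographic root system datum, with weight/root
space `V` over `ℚ`, simple roots `α i`, an invariant inner product `B`,
Weyl group `W` acting faithfully on `V`, and the set of roots `isRoot`. -/
structure RootSystemData (I : Type) [Fintype I] [DecidableEq I] where
  V : Type
  [instAddCommGroup : AddCommGroup V]
  [instModule : Module ℚ V]
  W : Type
  [instGroup : Group W]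
  α : I → V
  B : V →ₗ[ℚ] V →ₗ[ℚ] ℚ
  toLin : W →* Module.End ℚ V
  s : I → W
  isRoot : V → Prop
  B_symm : ∀ x y, B x y = B y x
  B_pos : ∀ β, isRoot β → 0 < B β β
  B_inv : ∀ (w : W) (x y : V), B (toLin w x) (toLin w y) = B x y
  root_simple : ∀ i, isRoot (α i)
  root_inv : ∀ (w : W) (β : V), isRoot β → isRoot (toLin w β)
  root_gen : ∀ β, isRoot β → ∃ (w : W) (i : I), β = toLin w (α i)
  root_finite : (setOf isRoot).Finite
  indep : LinearIndependent ℚ α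
  s_act : ∀ i x, toLin (s i) x = x - (2 * B (α i) x / B (α i) (α i)) • α i
  gen : Subgroup.closure (Set.range s) = ⊤
  faithful : Function.Injective toLin
  root_int : ∀ β, isRoot β → ∃ c : I → ℤ, β = ∑ i, (c i : ℚ) • α i
  pos_or_neg : ∀ β, isRoot β →
    (∃ c : I → ℕ, β = ∑ i, (c i : ℚ) • α i) ∨ (∃ c : I → ℕ, -β = ∑ i, (c i : ℚ) • α i)

attribute [instance] RootSystemData.instAddCommGroup RootSystemData.instModule
  RootSystemData.instGroup

namespace RootSystemData

variable {I : Type} [Fintype I] [DecidableEq I] (R : RootSystemData I)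

/-- `β` is a positive root. -/
def IsPos (β : R.V) : Prop :=
  R.isRoot β ∧ ∃ c : I → ℕ, β = ∑ i, (c i : ℚ) • R.α i

/-- The finite set of positive roots. -/
noncomputable def posFinset : Finset R.V :=
  (Set.Finite.subset R.root_finite (fun _ hb => hb.1) : (setOf R.IsPos).Finite).toFinset

/-- Half the sum of the positive roots. -/
noncomputable def ρ : R.V := (2 : ℚ)⁻¹ • ∑ β ∈ R.posFinset, β

/-- The pairing `⟨x, β∨⟩` of `x` with the coroot of `β`. -/
noncomputable def coroot (β x : R.V) : ℚ := 2 * R.B β x / R.B β β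

open Classical in
/-- The reflection `s_β ∈ W` in a root `β`. -/
noncomputable def refl (β : R.V) : R.W :=
  if h : R.isRoot β then
    (R.root_gen β h).choose * R.s (R.root_gen β h).choose_spec.choose *
      (R.root_gen β h).choose⁻¹
  else 1

/-- The length function on the Weyl group. -/
noncomputable def len (w : R.W) : ℕ :=
  sInf {n | ∃ l : List I, l.length = n ∧ (l.map R.s).prod = w}

/-- Bruhat order: generated by multiplication by reflections which increases length. -/
def bruhatLE : R.W → R.W → Prop :=
  Relation.ReflTransGen (fun u v => (∃ β, R.IsPos β ∧ v = R.refl β * u) ∧ R.len u < R.len v)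

def bruhatLT (u v : R.W) : Prop := R.bruhatLE u v ∧ u ≠ v

/-- The parabolic subgroup `W_J`. -/
def WJ (J : Set I) : Subgroup R.W := Subgroup.closure (R.s '' J)

/-- `w` is a minimal-length representative of its coset `w W_J`. -/
def IsMinRep (J : Set I) (w : R.W) : Prop :=
  ∀ z ∈ R.WJ J, R.len w ≤ R.len (w * z)

/-- `β ∈ Δ⁺_J`: positive roots in the span of the simple roots indexed by `J`. -/
def posJ (J : Set I) (β : R.V) : Prop :=
  R.IsPos β ∧ β ∈ Submodule.span ℚ (R.α '' J)

/-- A Bruhat edge `x → x s_β` in the quantum Bruhat graph. -/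
def BruhatEdge (x : R.W) (β : R.V) : Prop :=
  R.IsPos β ∧ R.len (x * R.refl β) = R.len x + 1

/-- A quantum edge `x → x s_β` in the quantum Bruhat graph. -/
def QuantumEdge (x : R.W) (β : R.V) : Prop :=
  R.IsPos β ∧ (R.len (x * R.refl β) : ℚ) = R.len x + 1 - 2 * R.coroot β R.ρ

/-- An edge of the quantum Bruhat graph. -/
def QBGEdge (x : R.W) (β : R.V) : Prop := R.BruhatEdge x β ∨ R.QuantumEdge x β

/-- A quantum root: `ℓ(s_β) = 2⟨ρ, β∨⟩ - 1`. -/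
def IsQuantumRoot (β : R.V) : Prop :=
  R.IsPos β ∧ (R.len (R.refl β) : ℚ) = 2 * R.coroot β R.ρ - 1

/-- A long root (maximal squared length); in simply-laced type all roots are long. -/
def IsLong (β : R.V) : Prop :=
  R.isRoot β ∧ ∀ γ, R.isRoot γ → R.B γ γ ≤ R.B β β

/-- A short root. -/
def IsShort (β : R.V) : Prop := R.isRoot β ∧ ¬ R.IsLong β

def IsSimplyLaced : Prop :=
  ∀ β γ, R.isRoot β → R.isRoot γ → R.B β β = R.B γ γ

def IsIrreducible : Prop :=
  Nonempty I ∧ ∀ J : Set I,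
    (∀ i ∈ J, ∀ j ∉ J, R.B (R.α i) (R.α j) = 0) → J = ∅ ∨ J = Set.univ

/-- `θ` is the highest root. -/
def IsHighestRoot (θ : R.V) : Prop :=
  R.IsPos θ ∧ ∀ β, R.IsPos β → ∃ c : I → ℕ, θ - β = ∑ i, (c i : ℚ) • R.α i

/-- `ϖ` is the fundamental weight associated to `k`. -/
def IsFundamental (k : I) (ϖ : R.V) : Prop :=
  ∀ i, R.coroot (R.α i) ϖ = if i = k then 1 else 0

/-- `ϖ` is minuscule. -/
def IsMinuscule (ϖ : R.V) : Prop :=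
  ∀ β, R.isRoot β → R.coroot β ϖ ∈ ({-1, 0, 1} : Set ℚ)

/-- A strict total order on `Δ⁺` which is a reflection (convex) order. -/
def IsReflectionOrder (lt : R.V → R.V → Prop) : Prop :=
  (∀ β, ¬ lt β β) ∧ (∀ a b c, lt a b → lt b c → lt a c) ∧
  (∀ β γ, R.IsPos β → R.IsPos γ → β ≠ γ → lt β γ ∨ lt γ β) ∧
  (∀ β γ, R.IsPos β → R.IsPos γ → R.IsPos (β + γ) →
    (lt β (β + γ) ∧ lt (β + γ) γ) ∨ (lt γ (β + γ) ∧ lt (β + γ) β))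

end RootSystemData

open RootSystemData in
/-- A directed path in the quantum Bruhat graph with the given list of labels. -/
def QBGPath {I : Type} [Fintype I] [DecidableEq I] (R : RootSystemData I) :
    R.W → List R.V → R.W → Prop
  | x, [], y => x = y
  | x, β :: l, y => R.QBGEdge x β ∧ QBGPath R (x * R.refl β) l y

open RootSystemData in
/-- A directed path in the Bruhat graph (Bruhat edges only). -/
def BGPath {I : Type} [Fintype I] [DecidableEq I] (R : RootSystemData I) :
    R.W → List R.V → R.W → Prop
  | x, [], y => x = y
  | x, β :: l, y => R.BruhatEdge x β ∧ BGPath R (x * R.refl β) l y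

/-- The Cartan pairing `⟨α_j, α_i∨⟩` of type `B_n` (Bourbaki labelling, shifted
to be 0-based: the short simple root is the last one, index `n-1`). -/
def BCartan (n : ℕ) (i j : Fin n) : ℚ :=
  if i = j then 2
  else if (i : ℕ) = n - 1 ∧ (j : ℕ) + 1 = n - 1 then -2
  else if ((i : ℕ) + 1 = j ∨ (j : ℕ) + 1 = i) then -1
  else 0

/-- `R` is of type `B_n` (via the identification `e` of its index set with `Fin n`). -/
def IsTypeB {I : Type} [Fintype I] [DecidableEq I] (R : RootSystemData I)
    (n : ℕ) (e : I ≃ Fin n) : Prop :=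
  2 ≤ n ∧ ∀ i j, R.coroot (R.α i) (R.α j) = BCartan n (e i) (e j)

/-- The product `s_{a+1} s_{a+2} ⋯ s_{b+1}` (0-based: indices `a, a+1, …, b`). -/
noncomputable def sSeq {n : ℕ} (hn : 0 < n) (R : RootSystemData (Fin n)) (a b : ℕ) : R.W :=
  ((List.range (b + 1 - a)).map (fun t => R.s ⟨(a + t) % n, Nat.mod_lt _ hn⟩)).prod

/-- The sum `α_{a+1} + ⋯ + α_b` of simple roots (0-based half-open interval `[a, b)`). -/
def aSum {n : ℕ} (hn : 0 < n) (R : RootSystemData (Fin n)) (a b : ℕ) : R.V :=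
  ∑ t ∈ Finset.Ico a b, R.α ⟨t % n, Nat.mod_lt _ hn⟩

/-!
The hypotheses say `ℓ(s_j u) > ℓ(u)` and `ℓ(s_j w) < ℓ(w)`. For a Bruhat edge,
`ℓ((s_j u) s_β) = ℓ(s_j w) < ℓ(w) = ℓ(u) + 1 ≤ ℓ(s_j u)`, so `uβ > 0` while `s_j uβ < 0`. The only
positive root made negative by `s_j` is `α_j`, hence `uβ = α_j`, `β = u⁻¹α_j` and
`w = u s_β = s_{uβ} u = s_j u`.

A quantum edge is impossible. In `∑_{γ > 0} ⟨γ, β∨⟩ = 2⟨ρ, β∨⟩` the positive roots not inverted by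
`s_β` cancel in pairs `γ, s_β γ`, each inversion contributes at least `1` and `β` itself `2`, so
`ℓ(s_β) ≤ |Inv(s_β)| ≤ 2⟨ρ, β∨⟩ - 1`. Then `s_j u = (s_j w) s_β` gives
`ℓ(s_j u) ≤ ℓ(s_j w) + ℓ(s_β) < ℓ(w) + 2⟨ρ, β∨⟩ - 1 = ℓ(u)`.
-/

namespace RootSystemData

variable {I : Type} [Fintype I] [DecidableEq I] (R : RootSystemData I)

section Action

@[simp]
lemma toLin_mul_apply (a b : R.W) (x : R.V) :
    R.toLin (a * b) x = R.toLin a (R.toLin b x) := by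
  rw [map_mul, Module.End.mul_apply]

@[simp]
lemma toLin_one_apply (x : R.V) : R.toLin 1 x = x := by
  rw [map_one, Module.End.one_apply]

@[simp]
lemma toLin_inv_apply_apply (v : R.W) (x : R.V) : R.toLin v⁻¹ (R.toLin v x) = x := by
  rw [← toLin_mul_apply, inv_mul_cancel, toLin_one_apply]

@[simp]
lemma toLin_apply_inv_apply (v : R.W) (x : R.V) : R.toLin v (R.toLin v⁻¹ x) = x := by
  rw [← toLin_mul_apply, mul_inv_cancel, toLin_one_apply]

lemma root_ne_zero {β : R.V} (hβ : R.isRoot β) : β ≠ 0 := by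
  rintro rfl
  simpa using R.B_pos 0 hβ

lemma coroot_self {β : R.V} (hβ : R.isRoot β) : R.coroot β β = 2 := by
  have := (R.B_pos β hβ).ne'
  rw [coroot]
  field_simp

lemma coroot_smul_right (β x : R.V) (c : ℚ) : R.coroot β (c • x) = c * R.coroot β x := by
  simp only [coroot, map_smul, smul_eq_mul]
  ring

lemma coroot_sub_right (β x y : R.V) : R.coroot β (x - y) = R.coroot β x - R.coroot β y := by
  simp only [coroot, map_sub]
  ring

lemma coroot_sum_right {ι : Type*} (β : R.V) (s : Finset ι) (v : ι → R.V) :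
    R.coroot β (∑ i ∈ s, v i) = ∑ i ∈ s, R.coroot β (v i) := by
  simp only [coroot, map_sum, Finset.mul_sum, Finset.sum_div]

lemma coroot_toLin (v : R.W) (β x : R.V) :
    R.coroot (R.toLin v β) x = R.coroot β (R.toLin v⁻¹ x) := by
  rw [← R.toLin_apply_inv_apply v x]
  simp only [coroot, B_inv, toLin_inv_apply_apply]

end Action

section Reflection

lemma toLin_refl {β : R.V} (hβ : R.isRoot β) (x : R.V) :
    R.toLin (R.refl β) x = x - R.coroot β x • β := by
  have hβ_eq := (R.root_gen β hβ).choose_spec.choose_spec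
  rw [refl, dif_pos hβ, toLin_mul_apply, toLin_mul_apply, s_act, map_sub, map_smul,
    toLin_apply_inv_apply, ← coroot, ← coroot_toLin, ← hβ_eq]

lemma toLin_refl_self {β : R.V} (hβ : R.isRoot β) : R.toLin (R.refl β) β = -β := by
  rw [R.toLin_refl hβ, R.coroot_self hβ]
  module

lemma toLin_refl_toLin_refl {β : R.V} (hβ : R.isRoot β) (x : R.V) :
    R.toLin (R.refl β) (R.toLin (R.refl β) x) = x := by
  rw [R.toLin_refl hβ, R.toLin_refl hβ, R.coroot_sub_right, R.coroot_smul_right,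
    R.coroot_self hβ]
  module

lemma refl_mul_refl {β : R.V} (hβ : R.isRoot β) : R.refl β * R.refl β = 1 :=
  R.faithful <| LinearMap.ext fun x => by
    rw [toLin_mul_apply, R.toLin_refl_toLin_refl hβ, toLin_one_apply]

lemma refl_α (i : I) : R.refl (R.α i) = R.s i :=
  R.faithful <| LinearMap.ext fun x => by
    rw [R.toLin_refl (R.root_simple i), s_act, coroot]

lemma refl_conj {β : R.V} (hβ : R.isRoot β) (v : R.W) :
    v * R.refl β * v⁻¹ = R.refl (R.toLin v β) :=
  R.faithful <| LinearMap.ext fun x => by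
    rw [R.toLin_refl (R.root_inv v β hβ), toLin_mul_apply, toLin_mul_apply, R.toLin_refl hβ,
      map_sub, map_smul, toLin_apply_inv_apply, coroot_toLin]

lemma s_mul_s (i : I) : R.s i * R.s i = 1 := by
  rw [← refl_α, R.refl_mul_refl (R.root_simple i)]

lemma s_inv (i : I) : (R.s i)⁻¹ = R.s i :=
  inv_eq_of_mul_eq_one_right (R.s_mul_s i)

end Reflection

section Positivity

lemma eq_of_smul_α_eq_sum {i : I} {q : ℚ} {f : I → ℚ} (h : q • R.α i = ∑ k, f k • R.α k)
    (k : I) : f k = if k = i then q else 0 :=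
  (Fintype.linearIndependent_iffₛ.mp R.indep (fun k => if k = i then q else 0) f
    (by simpa [ite_smul] using h) k).symm

def IsNonneg (v : R.V) : Prop :=
  ∃ c : I → ℚ, (∀ i, 0 ≤ c i) ∧ v = ∑ i, c i • R.α i

variable {R}

lemma IsPos.isNonneg {β : R.V} (hβ : R.IsPos β) : R.IsNonneg β := by
  obtain ⟨-, c, hc⟩ := hβ
  exact ⟨fun i => c i, fun i => Nat.cast_nonneg _, hc⟩

lemma IsNonneg.add {x y : R.V} (hx : R.IsNonneg x) (hy : R.IsNonneg y) : R.IsNonneg (x + y) := by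
  obtain ⟨c, hc, rfl⟩ := hx
  obtain ⟨d, hd, rfl⟩ := hy
  exact ⟨c + d, fun i => add_nonneg (hc i) (hd i), by simp [add_smul, Finset.sum_add_distrib]⟩

lemma IsNonneg.smul {x : R.V} {q : ℚ} (hq : 0 ≤ q) (hx : R.IsNonneg x) : R.IsNonneg (q • x) := by
  obtain ⟨c, hc, rfl⟩ := hx
  exact ⟨q • c, fun i => mul_nonneg hq (hc i), by simp [Finset.smul_sum, smul_smul]⟩

lemma IsNonneg.eq_zero_of_neg {x : R.V} (hx : R.IsNonneg x) (hnx : R.IsNonneg (-x)) : x = 0 := by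
  obtain ⟨c, hc, rfl⟩ := hx
  obtain ⟨d, hd, hnx⟩ := hnx
  have hcd : ∀ i, c i + d i = 0 := Fintype.linearIndependent_iffₛ.mp R.indep (c + d) 0
    (by simp [add_smul, Finset.sum_add_distrib, ← hnx])
  exact Finset.sum_eq_zero fun i _ => by
    rw [le_antisymm (by linarith [hd i, hcd i]) (hc i), zero_smul]

variable (R)

lemma isPos_α (i : I) : R.IsPos (R.α i) :=
  ⟨R.root_simple i, Pi.single i 1, by simp [Pi.single_apply]⟩

lemma not_isPos_neg {β : R.V} (hβ : R.IsPos β) : ¬ R.IsPos (-β) := fun hnβ =>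
  R.root_ne_zero hβ.1 (hβ.isNonneg.eq_zero_of_neg hnβ.isNonneg)

lemma isPos_or_isPos_neg {β : R.V} (hβ : R.isRoot β) : R.IsPos β ∨ R.IsPos (-β) := by
  refine (R.pos_or_neg β hβ).imp (fun h => ⟨hβ, h⟩) (fun h => ⟨?_, h⟩)
  rw [← R.toLin_refl_self hβ]
  exact R.root_inv _ _ hβ

lemma exists_int_eq_of_isRoot_smul_α {i : I} {q : ℚ} (h : R.isRoot (q • R.α i)) :
    ∃ z : ℤ, q = z := by
  obtain ⟨z, hz⟩ := R.root_int _ h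
  exact ⟨z i, by simpa using (R.eq_of_smul_α_eq_sum hz i).symm⟩

/-- `q` and `q⁻¹` are both integers: write `q α_i = v α_m` and read off coordinates of the roots
`q α_i` and `v⁻¹ α_i = q⁻¹ α_m`. -/
lemma eq_one_of_isRoot_smul_α {i : I} {q : ℚ} (h : R.isRoot (q • R.α i)) (hq : 0 < q) :
    q = 1 := by
  obtain ⟨z, rfl⟩ := R.exists_int_eq_of_isRoot_smul_α h
  obtain ⟨v, m, hvm⟩ := R.root_gen _ h
  have hinv : R.toLin v⁻¹ (R.α i) = ((z : ℚ)⁻¹) • R.α m := by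
    rw [← inv_smul_smul₀ hq.ne' (R.α i), hvm, map_smul, toLin_inv_apply_apply]
  obtain ⟨z', hz'⟩ := R.exists_int_eq_of_isRoot_smul_α
    (hinv ▸ R.root_inv v⁻¹ _ (R.root_simple i))
  have hzz' : z * z' = 1 := by
    exact_mod_cast (hz' ▸ mul_inv_cancel₀ hq.ne' : (z : ℚ) * z' = 1)
  rcases Int.isUnit_iff.mp (IsUnit.of_mul_eq_one _ hzz') with rfl | rfl
  · norm_num
  · norm_num at hq

lemma eq_α_of_isPos_neg_toLin_s {β : R.V} {i : I} (hβ : R.IsPos β)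
    (hneg : R.IsPos (-(R.toLin (R.s i) β))) : β = R.α i := by
  obtain ⟨hβr, c, hc⟩ := hβ
  obtain ⟨-, d, hd⟩ := hneg
  have hsum : R.coroot (R.α i) β • R.α i = ∑ k, ((c k : ℚ) + d k) • R.α k := by
    rw [Finset.sum_congr rfl fun k _ => add_smul _ _ _, Finset.sum_add_distrib, ← hc, ← hd,
      s_act, coroot]
    abel
  have hc_ne : ∀ k ≠ i, (c k : ℚ) = 0 := fun k hk => by
    have := R.eq_of_smul_α_eq_sum hsum k
    rw [if_neg hk] at this
    linarith [(c k).cast_nonneg (α := ℚ), (d k).cast_nonneg (α := ℚ)]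
  have hβi : β = (c i : ℚ) • R.α i := by
    rw [hc, Finset.sum_eq_single i (fun k _ hk => by rw [hc_ne k hk, zero_smul]) (by simp)]
  have hci : (0 : ℚ) < c i := by
    refine Nat.cast_pos.mpr (Nat.pos_of_ne_zero fun h0 => R.root_ne_zero hβr ?_)
    rw [hβi, h0, Nat.cast_zero, zero_smul]
  rw [hβi, R.eq_one_of_isRoot_smul_α (hβi ▸ hβr) hci, one_smul]

end Positivity

section Length

lemma prod_map_s_reverse (l : List I) : (l.reverse.map R.s).prod = (l.map R.s).prod⁻¹ := by
  rw [List.prod_inv_reverse, List.map_map, List.map_reverse]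
  simp only [Function.comp_def, s_inv]

lemma exists_prod_map_s_eq (w : R.W) : ∃ l : List I, (l.map R.s).prod = w := by
  have hw : w ∈ Subgroup.closure (Set.range R.s) := R.gen ▸ Subgroup.mem_top w
  induction hw using Subgroup.closure_induction with
  | mem x hx =>
    obtain ⟨i, rfl⟩ := hx
    exact ⟨[i], by simp⟩
  | one => exact ⟨[], rfl⟩
  | mul x y _ _ hx hy =>
    obtain ⟨lx, rfl⟩ := hx
    obtain ⟨ly, rfl⟩ := hy
    exact ⟨lx ++ ly, by simp⟩
  | inv x _ hx =>
    obtain ⟨l, rfl⟩ := hx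
    exact ⟨l.reverse, R.prod_map_s_reverse l⟩

lemma len_le_length {w : R.W} {l : List I} (hl : (l.map R.s).prod = w) : R.len w ≤ l.length :=
  Nat.sInf_le ⟨l, rfl, hl⟩

lemma exists_length_eq_len (w : R.W) :
    ∃ l : List I, l.length = R.len w ∧ (l.map R.s).prod = w := by
  obtain ⟨l, hl⟩ := R.exists_prod_map_s_eq w
  exact Nat.sInf_mem (s := {n | ∃ l : List I, l.length = n ∧ (l.map R.s).prod = w})
    ⟨l.length, l, rfl, hl⟩

lemma len_one : R.len 1 = 0 :=
  Nat.le_zero.mp (R.len_le_length (l := []) rfl)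

lemma len_mul_le (x y : R.W) : R.len (x * y) ≤ R.len x + R.len y := by
  obtain ⟨lx, hlx, rfl⟩ := R.exists_length_eq_len x
  obtain ⟨ly, hly, rfl⟩ := R.exists_length_eq_len y
  rw [← hlx, ← hly, ← List.length_append]
  exact R.len_le_length (by simp)

lemma len_inv (w : R.W) : R.len w⁻¹ = R.len w := by
  have key : ∀ v : R.W, R.len v⁻¹ ≤ R.len v := fun v => by
    obtain ⟨l, hl, rfl⟩ := R.exists_length_eq_len v
    rw [← hl, ← List.length_reverse]
    exact R.len_le_length (R.prod_map_s_reverse l)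
  exact le_antisymm (key w) (by simpa using key w⁻¹)

lemma len_mul_s_le (w : R.W) (i : I) : R.len (w * R.s i) ≤ R.len w + 1 :=
  (R.len_mul_le w (R.s i)).trans (Nat.add_le_add_left (R.len_le_length (l := [i]) (by simp)) _)

lemma exists_len_mul_s_lt {w : R.W} (hw : w ≠ 1) : ∃ i, R.len (w * R.s i) < R.len w := by
  obtain ⟨l, hl, hprod⟩ := R.exists_length_eq_len w
  rcases List.eq_nil_or_concat l with rfl | ⟨t, i, rfl⟩
  · exact absurd hprod.symm hw
  · refine ⟨i, lt_of_le_of_lt (R.len_le_length (l := t) ?_) ?_⟩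
    · simp [← hprod, mul_assoc, s_mul_s]
    · simp [← hl]

/-- The exchange property: the deleted letter is the one at which `β` changes sign. -/
lemma exists_prod_map_s_eq_mul_refl (l : List I) {β : R.V} (hβ : R.IsPos β)
    (hneg : R.IsPos (-(R.toLin (l.map R.s).prod β))) :
    ∃ l' : List I, l'.length + 1 = l.length ∧ (l'.map R.s).prod = (l.map R.s).prod * R.refl β := by
  induction l with
  | nil => exact absurd hneg (R.not_isPos_neg (by simpa using hβ))
  | cons k t ih =>
    set p := (t.map R.s).prod
    rcases R.isPos_or_isPos_neg (R.root_inv p β hβ.1) with hpos | hneg'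
    · have hpβ : R.toLin p β = R.α k :=
        R.eq_α_of_isPos_neg_toLin_s hpos (by simpa [p] using hneg)
      refine ⟨t, rfl, ?_⟩
      rw [List.map_cons, List.prod_cons, ← refl_α, ← hpβ, ← R.refl_conj hβ.1, inv_mul_cancel_right,
        mul_assoc, R.refl_mul_refl hβ.1, mul_one]
    · obtain ⟨l', hl', hprod⟩ := ih hneg'
      exact ⟨k :: l', by simp [hl'], by simp [hprod, p, mul_assoc]⟩

lemma len_mul_refl_lt {w : R.W} {β : R.V} (hβ : R.IsPos β)
    (hneg : R.IsPos (-(R.toLin w β))) : R.len (w * R.refl β) < R.len w := by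
  obtain ⟨l, hl, rfl⟩ := R.exists_length_eq_len w
  obtain ⟨l', hl', hprod⟩ := R.exists_prod_map_s_eq_mul_refl l hβ hneg
  have := R.len_le_length hprod
  omega

lemma len_lt_len_mul_refl {w : R.W} {β : R.V} (hβ : R.IsPos β)
    (hpos : R.IsPos (R.toLin w β)) : R.len w < R.len (w * R.refl β) := by
  have := R.len_mul_refl_lt (w := w * R.refl β) hβ
    (by rwa [toLin_mul_apply, R.toLin_refl_self hβ.1, map_neg, neg_neg])
  rwa [mul_assoc, R.refl_mul_refl hβ.1, mul_one] at this

lemma len_s_mul (w : R.W) (i : I) : R.len (R.s i * w) = R.len (w⁻¹ * R.refl (R.α i)) := by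
  rw [← len_inv, mul_inv_rev, refl_α, s_inv]

lemma len_s_mul_lt {w : R.W} {i : I} (hneg : R.IsPos (-(R.toLin w⁻¹ (R.α i)))) :
    R.len (R.s i * w) < R.len w := by
  simpa [len_s_mul, len_inv] using R.len_mul_refl_lt (R.isPos_α i) hneg

lemma len_lt_len_s_mul {w : R.W} {i : I} (hpos : R.IsPos (R.toLin w⁻¹ (R.α i))) :
    R.len w < R.len (R.s i * w) := by
  simpa [len_s_mul, len_inv] using R.len_lt_len_mul_refl (R.isPos_α i) hpos

end Length

section Inversions

open Classical

noncomputable def inversions (w : R.W) : Finset R.V :=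
  R.posFinset.filter fun γ => R.IsPos (-(R.toLin w γ))

lemma mem_posFinset {γ : R.V} : γ ∈ R.posFinset ↔ R.IsPos γ := by
  rw [posFinset, Set.Finite.mem_toFinset]
  rfl

lemma mem_inversions {w : R.W} {γ : R.V} :
    γ ∈ R.inversions w ↔ R.IsPos γ ∧ R.IsPos (-(R.toLin w γ)) := by
  rw [inversions, Finset.mem_filter, mem_posFinset]

lemma inversions_subset_posFinset (w : R.W) : R.inversions w ⊆ R.posFinset :=
  Finset.filter_subset _ _

lemma exists_int_coroot_eq {β δ : R.V} (hβ : R.isRoot β) (hδ : R.isRoot δ) :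
    ∃ z : ℤ, R.coroot β δ = z := by
  obtain ⟨v, m, rfl⟩ := R.root_gen β hβ
  have hδ' : R.isRoot (R.toLin v⁻¹ δ) := R.root_inv _ _ hδ
  obtain ⟨z, hz⟩ := R.root_int _ hδ'
  obtain ⟨z', hz'⟩ := R.root_int _ (R.root_inv (R.s m) _ hδ')
  have hdiff : R.coroot (R.α m) (R.toLin v⁻¹ δ) • R.α m = ∑ k, ((z k : ℚ) - z' k) • R.α k := by
    rw [Finset.sum_congr rfl fun k _ => sub_smul _ _ _, Finset.sum_sub_distrib, ← hz, ← hz',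
      s_act, coroot]
    abel
  refine ⟨z m - z' m, ?_⟩
  rw [coroot_toLin]
  simpa using (R.eq_of_smul_α_eq_sum hdiff m).symm

lemma toLin_s_α (i : I) : R.toLin (R.s i) (R.α i) = -R.α i := by
  rw [← refl_α, R.toLin_refl_self (R.root_simple i)]

lemma isPos_toLin_s {γ : R.V} {i : I} (hγ : R.IsPos γ) (hne : γ ≠ R.α i) :
    R.IsPos (R.toLin (R.s i) γ) :=
  (R.isPos_or_isPos_neg (R.root_inv _ _ hγ.1)).resolve_right fun h =>
    hne (R.eq_α_of_isPos_neg_toLin_s hγ h)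

lemma card_inversions_mul_s_lt {w : R.W} {i : I} (hneg : R.IsPos (-(R.toLin w (R.α i)))) :
    (R.inversions (w * R.s i)).card < (R.inversions w).card := by
  have hαi : R.α i ∈ R.inversions w := R.mem_inversions.mpr ⟨R.isPos_α i, hneg⟩
  refine lt_of_le_of_lt (Finset.card_le_card_of_injOn (R.toLin (R.s i))
    (t := (R.inversions w).erase (R.α i)) ?_
    fun x _ y _ h => by simpa using congrArg (R.toLin (R.s i)⁻¹) h)
    (Finset.card_erase_lt_of_mem hαi)
  intro γ hγ
  rw [Finset.mem_coe, mem_inversions] at hγ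
  obtain ⟨hγpos, hγneg⟩ := hγ
  have hγα : γ ≠ R.α i := by
    rintro rfl
    rw [toLin_mul_apply, toLin_s_α, map_neg, neg_neg] at hγneg
    exact R.not_isPos_neg hγneg hneg
  refine Finset.mem_erase.mpr ⟨fun h => ?_, R.mem_inversions.mpr ⟨R.isPos_toLin_s hγpos hγα, ?_⟩⟩
  · have : γ = -R.α i := by rw [← toLin_s_α, ← h, ← toLin_mul_apply, s_mul_s, toLin_one_apply]
    exact R.not_isPos_neg (R.isPos_α i) (this ▸ hγpos)
  · rwa [← toLin_mul_apply]

lemma len_le_card_inversions (w : R.W) : R.len w ≤ (R.inversions w).card := by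
  induction hn : (R.inversions w).card using Nat.strong_induction_on generalizing w with
  | _ n ih =>
  rcases eq_or_ne w 1 with rfl | hw
  · rw [len_one]
    exact Nat.zero_le _
  obtain ⟨i, hi⟩ := R.exists_len_mul_s_lt hw
  have hwα : R.IsPos (-(R.toLin w (R.α i))) :=
    (R.isPos_or_isPos_neg (R.root_inv _ _ (R.root_simple i))).resolve_left fun h => by
      have := R.len_lt_len_mul_refl (R.isPos_α i) h
      rw [refl_α] at this
      omega
  have hlt := hn ▸ R.card_inversions_mul_s_lt hwα
  have hle := ih _ hlt (w * R.s i) rfl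
  have hback : R.len w ≤ R.len (w * R.s i) + 1 := by
    simpa [mul_assoc, s_mul_s] using R.len_mul_s_le (w * R.s i) i
  omega

lemma one_le_coroot_of_mem_inversions {β γ : R.V} (hβ : R.IsPos β)
    (hγ : γ ∈ R.inversions (R.refl β)) : 1 ≤ R.coroot β γ := by
  obtain ⟨hγpos, hγneg⟩ := R.mem_inversions.mp hγ
  have hpos : 0 < R.coroot β γ := by
    by_contra! hc
    have hnn : R.IsNonneg (R.toLin (R.refl β) γ) := by
      rw [R.toLin_refl hβ.1, sub_eq_add_neg, ← neg_smul]
      exact hγpos.isNonneg.add (hβ.isNonneg.smul (neg_nonneg.mpr hc))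
    exact R.root_ne_zero (R.root_inv _ _ hγpos.1) (hnn.eq_zero_of_neg hγneg.isNonneg)
  obtain ⟨z, hz⟩ := R.exists_int_coroot_eq hβ.1 hγpos.1
  rw [hz] at hpos ⊢
  exact_mod_cast (show (0 : ℤ) < z by exact_mod_cast hpos)

lemma sum_coroot_sdiff_inversions_refl {β : R.V} (hβ : R.isRoot β) :
    ∑ γ ∈ R.posFinset \ R.inversions (R.refl β), R.coroot β γ = 0 := by
  have hmem : ∀ γ, γ ∈ R.posFinset \ R.inversions (R.refl β) ↔
      R.IsPos γ ∧ ¬ R.IsPos (-(R.toLin (R.refl β) γ)) := fun γ => by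
    simp only [Finset.mem_sdiff, mem_posFinset, mem_inversions]
    tauto
  refine Finset.sum_involution (fun γ _ => R.toLin (R.refl β) γ) (fun γ _ => ?_)
    (fun γ _ hγ h => ?_) (fun γ hγ => ?_) (fun γ _ => R.toLin_refl_toLin_refl hβ γ)
  · rw [R.toLin_refl hβ, R.coroot_sub_right, R.coroot_smul_right, R.coroot_self hβ]
    ring
  · rw [R.toLin_refl hβ, sub_eq_self, smul_eq_zero] at h
    exact h.elim hγ (R.root_ne_zero hβ)
  · obtain ⟨hγpos, hγneg⟩ := (hmem γ).mp hγ
    refine (hmem _).mpr ⟨(R.isPos_or_isPos_neg (R.root_inv _ _ hγpos.1)).resolve_right hγneg, ?_⟩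
    rw [R.toLin_refl_toLin_refl hβ]
    exact R.not_isPos_neg hγpos

lemma sum_coroot_posFinset (β : R.V) : ∑ γ ∈ R.posFinset, R.coroot β γ = 2 * R.coroot β R.ρ := by
  rw [ρ, R.coroot_smul_right, R.coroot_sum_right]
  ring

lemma card_inversions_refl_add_one_le {β : R.V} (hβ : R.IsPos β) :
    ((R.inversions (R.refl β)).card : ℚ) + 1 ≤ 2 * R.coroot β R.ρ := by
  set S := R.inversions (R.refl β)
  have hβS : β ∈ S := R.mem_inversions.mpr ⟨hβ, by rwa [R.toLin_refl_self hβ.1, neg_neg]⟩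
  have hsum : 2 * R.coroot β R.ρ = 2 + ∑ γ ∈ S.erase β, R.coroot β γ := by
    rw [← sum_coroot_posFinset, ← Finset.sum_sdiff (R.inversions_subset_posFinset _),
      R.sum_coroot_sdiff_inversions_refl hβ.1, zero_add, ← Finset.add_sum_erase S _ hβS,
      R.coroot_self hβ.1]
  have hle : ((S.erase β).card : ℚ) ≤ ∑ γ ∈ S.erase β, R.coroot β γ := by
    simpa using Finset.card_nsmul_le_sum (S.erase β) _ 1 fun γ hγ =>
      R.one_le_coroot_of_mem_inversions hβ (Finset.mem_of_mem_erase hγ)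
  rw [← Finset.card_erase_add_one hβS]
  push_cast
  linarith

lemma len_refl_add_one_le {β : R.V} (hβ : R.IsPos β) :
    (R.len (R.refl β) : ℚ) + 1 ≤ 2 * R.coroot β R.ρ :=
  le_trans (by exact_mod_cast Nat.add_le_add_right (R.len_le_card_inversions _) 1)
    (R.card_inversions_refl_add_one_le hβ)

end Inversions

section Edges

variable {u : R.W} {β : R.V} {j : I}

lemma toLin_eq_α_of_bruhatEdge (hedge : R.BruhatEdge u β) (hu : R.len u < R.len (R.s j * u))
    (hw : R.len (R.s j * (u * R.refl β)) < R.len (u * R.refl β)) : R.toLin u β = R.α j := by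
  obtain ⟨hβ, hlen⟩ := hedge
  have hpos : R.IsPos (R.toLin u β) :=
    (R.isPos_or_isPos_neg (R.root_inv _ _ hβ.1)).resolve_right fun h => by
      have := R.len_mul_refl_lt hβ h
      omega
  refine R.eq_α_of_isPos_neg_toLin_s hpos
    ((R.isPos_or_isPos_neg (R.root_inv _ _ hpos.1)).resolve_left fun h => ?_)
  have := R.len_lt_len_mul_refl hβ (by rwa [← toLin_mul_apply] at h)
  rw [mul_assoc] at this
  omega

lemma not_quantumEdge (hu : R.len u < R.len (R.s j * u))
    (hw : R.len (R.s j * (u * R.refl β)) < R.len (u * R.refl β)) : ¬ R.QuantumEdge u β := by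
  rintro ⟨hβ, hq⟩
  have hsub : R.len (R.s j * u) ≤ R.len (R.s j * (u * R.refl β)) + R.len (R.refl β) := by
    simpa [mul_assoc, R.refl_mul_refl hβ.1] using R.len_mul_le (R.s j * (u * R.refl β)) (R.refl β)
  have hrefl := R.len_refl_add_one_le hβ
  qify at hu hw hsub
  linarith

end Edges

end RootSystemData

theorem stmt6_general {I : Type} [Fintype I] [DecidableEq I] (R : RootSystemData I)
    (u w : R.W) (β : R.V)
    (hw : w = u * R.refl β) (hedge : R.QBGEdge u β) (j : I)
    (hneg : R.IsPos (-(R.toLin w⁻¹ (R.α j))))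
    (hpos : R.IsPos (R.toLin u⁻¹ (R.α j))) :
    R.BruhatEdge u β ∧ β = R.toLin u⁻¹ (R.α j) ∧ w = R.s j * u := by
  subst hw
  have hsu := R.len_lt_len_s_mul hpos
  have hsw := R.len_s_mul_lt hneg
  rcases hedge with hbruhat | hquantum
  · have huβ := R.toLin_eq_α_of_bruhatEdge hbruhat hsu hsw
    refine ⟨hbruhat, by rw [← huβ, R.toLin_inv_apply_apply], ?_⟩
    rw [← R.refl_α, ← huβ, ← R.refl_conj hbruhat.1.1, inv_mul_cancel_right]
  · exact absurd hquantum (R.not_quantumEdge hsu hsw)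

/-- Diamond lemma for the quantum Bruhat graph, part (1). -/
theorem stmt6 {I : Type} [Fintype I] [DecidableEq I] (R : RootSystemData I)
    (u w : R.W) (β : R.V) (hβ : R.IsPos β)
    (hw : w = u * R.refl β) (hedge : R.QBGEdge u β) (j : I)
    (hneg : R.IsPos (-(R.toLin w⁻¹ (R.α j))))
    (hpos : R.IsPos (R.toLin u⁻¹ (R.α j))) :
    R.BruhatEdge u β ∧ β = R.toLin u⁻¹ (R.α j) ∧ w = R.s j * u :=
  stmt6_general R u w β hw hedge j hneg hpos
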